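/- Let (C, J) be a site and A an object of C. The poset of J-closed sieves on A, ordered by inclusion, forms a complete Heyting algebra (a frame): it has arbitrary infima given by intersections, arbitrary suprema given by S ↦ {f : f*(⋃ S_i) ∈ J(dom f)}, and finite meets distribute over arbitrary joins. -/
import Mathlib

open CategoryTheory

/-- The `J`-closed sieves on `A`, ordered by inclusion, form a complete Heyting algebra
(a frame): arbitrary infima are intersections, arbitrary suprema are given by
`S ↦ {f : f*(⋃ᵢ Sᵢ) ∈ J(dom f)}`, and finite meets distribute over arbitrary joins. -/
theorem closedSieves_frame {C : Type*} [SmallCategory C] (J : GrothendieckTopology C) (A : C) :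
    (∀ (ι : Type) (S : ι → Sieve A), (∀ i, J.IsClosed (S i)) →
      (J.IsClosed (⨅ i, S i) ∧ ∀ ⦃X : C⦄ (f : X ⟶ A), (⨅ i, S i) f ↔ ∀ i, S i f)) ∧
    (∀ (ι : Type) (S : ι → Sieve A), (∀ i, J.IsClosed (S i)) →
      (J.IsClosed (J.close (⨆ i, S i)) ∧
       (∀ ⦃X : C⦄ (f : X ⟶ A), (J.close (⨆ i, S i)) f ↔ (⨆ i, S i).pullback f ∈ J X) ∧
       (∀ i, S i ≤ J.close (⨆ i, S i)) ∧
       ∀ T : Sieve A, J.IsClosed T → (∀ i, S i ≤ T) → J.close (⨆ i, S i) ≤ T)) ∧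
    (∀ (ι : Type) (S : ι → Sieve A) (T : Sieve A), (∀ i, J.IsClosed (S i)) → J.IsClosed T →
      T ⊓ J.close (⨆ i, S i) = J.close (⨆ i, T ⊓ S i)) := by
  have iInf_apply : ∀ (ι : Type) (S : ι → Sieve A) {X : C} (f : X ⟶ A),
      (⨅ i, S i) f ↔ ∀ i, S i f := by
    intro ι S X f
    rw [iInf, Sieve.sInf_apply]
    constructor
    · intro h i; exact h (S i) ⟨i, rfl⟩
    · rintro h _ ⟨i, rfl⟩; exact h i
  have iSup_apply : ∀ (ι : Type) (S : ι → Sieve A) {X : C} (f : X ⟶ A),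
      (⨆ i, S i) f ↔ ∃ i, S i f := by
    intro ι S X f
    rw [iSup, Sieve.sSup_apply]
    constructor
    · rintro ⟨_, ⟨i, rfl⟩, h⟩; exact ⟨i, h⟩
    · rintro ⟨i, h⟩; exact ⟨S i, ⟨i, rfl⟩, h⟩
  refine ⟨?_, ?_, ?_⟩
  · intro ι S hS
    refine ⟨?_, fun X f => iInf_apply ι S f⟩
    intro X f hf
    rw [iInf_apply]
    intro i
    refine hS i f (J.superset_covering ?_ hf)
    exact Sieve.pullback_monotone f (iInf_le S i)
  · intro ι S hS
    refine ⟨J.close_isClosed _, fun X f => Iff.rfl, fun i => le_trans (le_iSup S i) (J.le_close _),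
      fun T hT hle => J.le_close_of_isClosed (iSup_le hle) hT⟩
  · intro ι S T hS hT
    apply le_antisymm
    · rintro X f ⟨hTf, hcf⟩
      show (⨆ i, T ⊓ S i).pullback f ∈ J X
      refine J.superset_covering ?_ hcf
      intro Y g hg
      rw [Sieve.pullback_apply, iSup_apply] at hg ⊢
      obtain ⟨i, hi⟩ := hg
      exact ⟨i, T.downward_closed hTf g, hi⟩
    · refine le_inf ?_ (J.monotone_close (iSup_le fun i => le_trans inf_le_right (le_iSup S i)))
      exact J.le_close_of_isClosed (iSup_le fun i => inf_le_left) hT
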